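/- Let S = {T₁, …, Tₘ} be isometries on ℝⁿ, and suppose T_S ∈ aff(S) is linear, α-averaged for some α ∈ (0,1), and Fix T_S ⊆ ∩_{T∈S} Fix T. Then Fix T_S = ∩_{T∈S} Fix T, and for every x ∈ ℝⁿ the sequence (CC_S^k x) converges to P_{∩_{T∈S} Fix T} x linearly with rate ‖T_S ∘ P_{(∩_{T∈S} Fix T)^⊥}‖ ∈ [0,1). -/

import Mathlib

/-!
An isometry fixing `z` keeps every point at the same distance from `z`, so for `z` in the common
fixed subspace `W` all the points `Tᵢ y` are equidistant from `z`. Their circumcenter `CC y`, the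
only equidistant point of `aff {Tᵢ y}`, is therefore the orthogonal projection of `z` onto that
affine span. Two things follow: `CC y` is at least as close to `P_W y` as `T_S y ∈ aff {Tᵢ y}`, and
(Pythagoras, with `z` ranging over the linear space `W`) `CC y - y ⊥ W`, so `P_W` is constant
along the iteration. Since `T_S y - P_W y = T_S P_{W⊥} (y - P_W y)`, each step contracts the
distance to `P_W x` by `‖T_S P_{W⊥}‖`.

That rate is `< 1` by compactness of the unit sphere: by strict convexity of the norm an averaged
operator strictly shrinks every vector it does not fix, and no nonzero vector of `W⊥` is fixed.
-/

open EuclideanGeometry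

namespace EuclideanGeometry

variable {V P ι : Type*} [NormedAddCommGroup V] [InnerProductSpace ℝ V] [MetricSpace P]
  [NormedAddTorsor V P] [Finite ι] [Nonempty ι] {f : ι → P} {c z : P}

theorem eq_orthogonalProjection_of_dist_eq
    (hc : ∀ p ∈ affineSpan ℝ (Set.range f), (∀ i j, dist p (f i) = dist p (f j)) → p = c)
    (hz : ∀ i j, dist (f i) z = dist (f j) z) :
    c = orthogonalProjection (affineSpan ℝ (Set.range f)) z := by
  have hmem i : f i ∈ affineSpan ℝ (Set.range f) := subset_affineSpan ℝ _ (Set.mem_range_self i)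
  refine (hc _ (orthogonalProjection_mem z) fun i j => ?_).symm
  rw [dist_comm, dist_comm _ (f j)]
  exact (dist_eq_iff_dist_orthogonalProjection_eq z (hmem i) (hmem j)).1 (hz i j)

theorem dist_le_of_mem_affineSpan_of_dist_eq
    (hc : ∀ p ∈ affineSpan ℝ (Set.range f), (∀ i j, dist p (f i) = dist p (f j)) → p = c)
    (hz : ∀ i j, dist (f i) z = dist (f j) z) {w : P} (hw : w ∈ affineSpan ℝ (Set.range f)) :
    dist c z ≤ dist w z := by
  rw [eq_orthogonalProjection_of_dist_eq hc hz, dist_comm, dist_orthogonalProjection_eq_infDist,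
    dist_comm]
  exact Metric.infDist_le_dist_of_mem hw

theorem dist_sq_add_dist_sq_of_dist_eq
    (hc : ∀ p ∈ affineSpan ℝ (Set.range f), (∀ i j, dist p (f i) = dist p (f j)) → p = c)
    (hz : ∀ i j, dist (f i) z = dist (f j) z) (i : ι) :
    dist (f i) c ^ 2 + dist z c ^ 2 = dist (f i) z ^ 2 := by
  rw [eq_orthogonalProjection_of_dist_eq hc hz, pow_two, pow_two, pow_two,
    dist_sq_eq_dist_orthogonalProjection_sq_add_dist_orthogonalProjection_sq z
      (subset_affineSpan ℝ _ (Set.mem_range_self i))]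

end EuclideanGeometry

theorem Isometry.dist_apply_eq_of_apply_eq_self {X : Type*} [PseudoMetricSpace X] {f : X → X}
    (hf : Isometry f) {z : X} (hz : f z = z) (y : X) : dist (f y) z = dist y z := by
  simpa only [hz] using hf.dist_eq y z

theorem sub_mem_orthogonal_of_isometry {E ι : Type*} [NormedAddCommGroup E]
    [InnerProductSpace ℝ E] [Finite ι] [Nonempty ι] {T : ι → E → E} (hT : ∀ i, Isometry (T i))
    {y c : E}
    (hc : ∀ p ∈ affineSpan ℝ (Set.range fun i => T i y),
      (∀ i j, dist p (T i y) = dist p (T j y)) → p = c)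
    {F : Submodule ℝ E} (hF : ∀ z ∈ F, ∀ i, T i z = z) : c - y ∈ Fᗮ := by
  obtain ⟨i⟩ := ‹Nonempty ι›
  have pythagoras : ∀ z ∈ F, dist (T i y) c ^ 2 + ‖z - c‖ ^ 2 = ‖y - z‖ ^ 2 := fun z hz => by
    have hdist j : dist (T j y) z = dist y z := (hT j).dist_apply_eq_of_apply_eq_self (hF z hz j) y
    rw [← dist_eq_norm, ← dist_eq_norm, ← hdist i]
    exact dist_sq_add_dist_sq_of_dist_eq hc (fun j k => by rw [hdist j, hdist k]) i
  rw [Submodule.mem_orthogonal]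
  intro z hz
  have h0 := pythagoras 0 F.zero_mem
  have hz' := pythagoras z hz
  rw [zero_sub, norm_neg, sub_zero] at h0
  rw [norm_sub_sq_real, norm_sub_sq_real] at hz'
  rw [inner_sub_right, real_inner_comm y z]
  linarith

theorem norm_apply_lt_of_averaged {E : Type*} [NormedAddCommGroup E] [NormedSpace ℝ E]
    [StrictConvexSpace ℝ E] {T : E →L[ℝ] E} {R : E → E} {a : ℝ} (ha : a ∈ Set.Ioo (0 : ℝ) 1)
    (hR : ∀ u v, ‖R u - R v‖ ≤ ‖u - v‖) (hT : ∀ u, T u = (1 - a) • u + a • R u) {u : E}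
    (hu : T u ≠ u) : ‖T u‖ < ‖u‖ := by
  obtain ⟨ha0, ha1⟩ := ha
  have hR0 : R 0 = 0 := by
    simpa [ha0.ne'] using (hT 0).symm
  have hRu : ‖R u‖ ≤ ‖u‖ := by simpa [hR0] using hR u 0
  have hne : u ≠ R u := fun h => hu (by rw [hT, ← h, ← add_smul, sub_add_cancel, one_smul])
  rw [hT]
  exact norm_combo_lt_of_ne le_rfl hRu hne (by linarith) ha0 (by ring)

theorem ContinuousLinearMap.opNorm_lt_one_of_norm_apply_lt {E F : Type*} [NormedAddCommGroup E]
    [NormedSpace ℝ E] [FiniteDimensional ℝ E] [NormedAddCommGroup F] [NormedSpace ℝ F]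
    (S : E →L[ℝ] F) (hS : ∀ u ≠ 0, ‖S u‖ < ‖u‖) : ‖S‖ < 1 := by
  rcases (Metric.sphere (0 : E) 1).eq_empty_or_nonempty with hempty | hne
  · have : ‖S‖ ≤ 0 := S.opNorm_le_of_unit_norm le_rfl fun x hx => by
      have : x ∈ Metric.sphere (0 : E) 1 := mem_sphere_zero_iff_norm.2 hx
      simp [hempty] at this
    linarith
  obtain ⟨u₀, hu₀, hmax⟩ :=
    (isCompact_sphere (0 : E) 1).exists_isMaxOn hne S.continuous.norm.continuousOn
  have hu₀ : ‖u₀‖ = 1 := mem_sphere_zero_iff_norm.1 hu₀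
  calc ‖S‖ ≤ ‖S u₀‖ :=
        S.opNorm_le_of_unit_norm (norm_nonneg _) fun x hx => hmax (mem_sphere_zero_iff_norm.2 hx)
    _ < ‖u₀‖ := hS u₀ (norm_ne_zero_iff.1 (by rw [hu₀]; exact one_ne_zero))
    _ = 1 := hu₀

theorem ContinuousLinearMap.opNorm_comp_starProjection_orthogonal_lt_one {E : Type*}
    [NormedAddCommGroup E] [InnerProductSpace ℝ E] [FiniteDimensional ℝ E] (T : E →L[ℝ] E)
    (F : Submodule ℝ E) (hT : ∀ u, T u ≠ u → ‖T u‖ < ‖u‖) (hFix : ∀ u, T u = u → u ∈ F) :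
    ‖T ∘L Fᗮ.starProjection‖ < 1 := by
  refine opNorm_lt_one_of_norm_apply_lt _ fun u hu => ?_
  rw [comp_apply]
  set v := Fᗮ.starProjection u
  have hv : ‖v‖ ≤ ‖u‖ := Fᗮ.norm_starProjection_apply_le u
  by_cases hfix : T v = v
  · have hv0 : v = 0 := Submodule.inf_orthogonal_eq_bot F |>.le ⟨hFix v hfix, Fᗮ.starProjection_apply_mem u⟩
    rw [hv0, map_zero, norm_zero]
    exact norm_pos_iff.2 hu
  · exact (hT v hfix).trans_le hv
  
theorem ContinuousLinearMap.norm_apply_sub_starProjection_le {E : Type*} [NormedAddCommGroup E]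
    [InnerProductSpace ℝ E] (T : E →L[ℝ] E) (F : Submodule ℝ E) [F.HasOrthogonalProjection]
    (hF : ∀ z ∈ F, T z = z) (y : E) :
    ‖T y - F.starProjection y‖ ≤ ‖T ∘L Fᗮ.starProjection‖ * ‖y - F.starProjection y‖ := by
  have hy : Fᗮ.starProjection (y - F.starProjection y) = y - F.starProjection y :=
    Fᗮ.starProjection_eq_self_iff.2 (F.sub_starProjection_mem_orthogonal y)
  calc ‖T y - F.starProjection y‖ = ‖(T ∘L Fᗮ.starProjection) (y - F.starProjection y)‖ := by
        rw [comp_apply, hy, map_sub, hF _ (F.starProjection_apply_mem y)]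
    _ ≤ _ := le_opNorm _ _

theorem dist_iterate_le_pow_mul {X : Type*} [PseudoMetricSpace X] {G P : X → X} {γ : ℝ}
    (hγ : 0 ≤ γ) (hP : ∀ y, P (G y) = P y) (hG : ∀ y, dist (G y) (P y) ≤ γ * dist y (P y))
    (x : X) (k : ℕ) : dist (G^[k] x) (P x) ≤ γ ^ k * dist x (P x) := by
  have hPk k : P (G^[k] x) = P x := by
    induction k with
    | zero => rfl
    | succ k ih => rw [Function.iterate_succ_apply', hP, ih]
  induction k with
  | zero => simp
  | succ k ih =>
    calc dist (G^[k + 1] x) (P x) = dist (G (G^[k] x)) (P (G^[k] x)) := by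
          rw [Function.iterate_succ_apply', hPk]
      _ ≤ γ * (γ ^ k * dist x (P x)) := (hG _).trans (by rw [hPk]; gcongr)
      _ = γ ^ (k + 1) * dist x (P x) := by ring

theorem stmt16_general {n : ℕ} {m : ℕ}
    (T : Fin m → EuclideanSpace ℝ (Fin n) → EuclideanSpace ℝ (Fin n))
    (hiso : ∀ i, Isometry (T i))
    (CC : EuclideanSpace ℝ (Fin n) → EuclideanSpace ℝ (Fin n))
    (hCC3 : ∀ y p, p ∈ affineSpan ℝ (Set.range fun i => T i y) →
      (∀ i j : Fin m, ‖p - T i y‖ = ‖p - T j y‖) → p = CC y)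
    (TS : EuclideanSpace ℝ (Fin n) →L[ℝ] EuclideanSpace ℝ (Fin n))
    (hTSaff : ∃ α : Fin m → ℝ, (∑ i, α i) = 1 ∧ ∀ x, TS x = ∑ i, α i • T i x)
    (a : ℝ) (ha : a ∈ Set.Ioo (0 : ℝ) 1)
    (hav : ∃ R : EuclideanSpace ℝ (Fin n) → EuclideanSpace ℝ (Fin n),
      (∀ u v, ‖R u - R v‖ ≤ ‖u - v‖) ∧ ∀ u, TS u = (1 - a) • u + a • R u)
    (hFixSub : ∀ x, TS x = x → ∀ i, T i x = x)
    (F : Submodule ℝ (EuclideanSpace ℝ (Fin n)))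
    (hF : ∀ x, x ∈ F ↔ ∀ i, T i x = x) :
    ((F : Set (EuclideanSpace ℝ (Fin n))) = {x | TS x = x}) ∧
    ‖TS.comp (Fᗮ.subtypeL.comp (Submodule.orthogonalProjectionOnto Fᗮ))‖ < 1 ∧
    ∀ (x : EuclideanSpace ℝ (Fin n)) (k : ℕ),
      ‖CC^[k] x - (Submodule.orthogonalProjectionOnto F x : EuclideanSpace ℝ (Fin n))‖
        ≤ ‖TS.comp (Fᗮ.subtypeL.comp (Submodule.orthogonalProjectionOnto Fᗮ))‖ ^ k
          * ‖x - (Submodule.orthogonalProjectionOnto F x : EuclideanSpace ℝ (Fin n))‖ := by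
  obtain ⟨α, hα, hTS⟩ := hTSaff
  obtain ⟨R, hR, hTSR⟩ := hav
  have : Nonempty (Fin m) :=
    Finset.univ_nonempty_iff.1 (Finset.nonempty_of_sum_ne_zero (hα ▸ one_ne_zero))
  have hFix x : x ∈ F ↔ TS x = x :=
    ⟨fun hx => by simp only [hTS, (hF x).1 hx, ← Finset.sum_smul, hα, one_smul],
      fun hx => (hF x).2 (hFixSub x hx)⟩
  have hCC y : ∀ p ∈ affineSpan ℝ (Set.range fun i => T i y),
      (∀ i j, dist p (T i y) = dist p (T j y)) → p = CC y :=
    fun p hp h => hCC3 y p hp (by simpa only [dist_eq_norm] using h)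
  have hstep y : dist (CC y) (F.starProjection y)
      ≤ ‖TS ∘L Fᗮ.starProjection‖ * dist y (F.starProjection y) := by
    have hdist i : dist (T i y) (F.starProjection y) = dist y (F.starProjection y) :=
      (hiso i).dist_apply_eq_of_apply_eq_self ((hF _).1 (F.starProjection_apply_mem y) i) y
    have hTSy : TS y ∈ affineSpan ℝ (Set.range fun i => T i y) := by
      rw [hTS, ← Finset.affineCombination_eq_linear_combination _ _ _ hα]
      exact affineCombination_mem_affineSpan hα _
    calc dist (CC y) (F.starProjection y) ≤ dist (TS y) (F.starProjection y) :=
          dist_le_of_mem_affineSpan_of_dist_eq (hCC y) (fun i j => by rw [hdist i, hdist j]) hTSy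
      _ ≤ _ := by
          simpa only [dist_eq_norm] using
            TS.norm_apply_sub_starProjection_le F (fun z hz => (hFix z).1 hz) y
  have hP y : F.starProjection (CC y) = F.starProjection y := by
    rw [← sub_eq_zero, ← map_sub, Submodule.starProjection_apply_eq_zero_iff]
    exact sub_mem_orthogonal_of_isometry hiso (hCC y) fun z hz => (hF z).1 hz
  refine ⟨Set.ext hFix, ?_, fun x k => ?_⟩
  · exact TS.opNorm_comp_starProjection_orthogonal_lt_one F
      (fun _ => norm_apply_lt_of_averaged ha hR hTSR) fun u => (hFix u).2
  · have h := dist_iterate_le_pow_mul (norm_nonneg _) hP hstep x k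
    rwa [dist_eq_norm, dist_eq_norm] at h

/-- If `T_S ∈ aff S` is linear and `α`-averaged with `Fix T_S ⊆ ∩_{T∈S} Fix T`,
then `Fix T_S = ∩_{T∈S} Fix T` and the circumcentered isometry method
converges linearly to the projection onto the common fixed point set, with
rate `‖T_S ∘ P_{(∩ Fix T)ᗮ}‖ < 1`. -/
theorem stmt16 {n : ℕ} {m : ℕ}
    (T : Fin m → EuclideanSpace ℝ (Fin n) → EuclideanSpace ℝ (Fin n))
    (hiso : ∀ i, Isometry (T i))
    (CC : EuclideanSpace ℝ (Fin n) → EuclideanSpace ℝ (Fin n))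
    (hCC1 : ∀ y, CC y ∈ affineSpan ℝ (Set.range fun i => T i y))
    (hCC2 : ∀ y (i j : Fin m), ‖CC y - T i y‖ = ‖CC y - T j y‖)
    (hCC3 : ∀ y p, p ∈ affineSpan ℝ (Set.range fun i => T i y) →
      (∀ i j : Fin m, ‖p - T i y‖ = ‖p - T j y‖) → p = CC y)
    (TS : EuclideanSpace ℝ (Fin n) →L[ℝ] EuclideanSpace ℝ (Fin n))
    (hTSaff : ∃ α : Fin m → ℝ, (∑ i, α i) = 1 ∧ ∀ x, TS x = ∑ i, α i • T i x)
    (a : ℝ) (ha : a ∈ Set.Ioo (0 : ℝ) 1)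
    (hav : ∃ R : EuclideanSpace ℝ (Fin n) → EuclideanSpace ℝ (Fin n),
      (∀ u v, ‖R u - R v‖ ≤ ‖u - v‖) ∧ ∀ u, TS u = (1 - a) • u + a • R u)
    (hFixSub : ∀ x, TS x = x → ∀ i, T i x = x)
    (F : Submodule ℝ (EuclideanSpace ℝ (Fin n)))
    (hF : ∀ x, x ∈ F ↔ ∀ i, T i x = x) :
    ((F : Set (EuclideanSpace ℝ (Fin n))) = {x | TS x = x}) ∧
    ‖TS.comp (Fᗮ.subtypeL.comp (Submodule.orthogonalProjectionOnto Fᗮ))‖ < 1 ∧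
    ∀ (x : EuclideanSpace ℝ (Fin n)) (k : ℕ),
      ‖CC^[k] x - (Submodule.orthogonalProjectionOnto F x : EuclideanSpace ℝ (Fin n))‖
        ≤ ‖TS.comp (Fᗮ.subtypeL.comp (Submodule.orthogonalProjectionOnto Fᗮ))‖ ^ k
          * ‖x - (Submodule.orthogonalProjectionOnto F x : EuclideanSpace ℝ (Fin n))‖ :=
  stmt16_general T hiso CC hCC3 TS hTSaff a ha hav hFixSub F hF
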